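/- arXiv:1302.7077 — 5 statements merged into one kernel-verified Lean document; each statement's English description precedes it below -/
import Mathlib

section
/- Let d ≥ 1 and let a and M be positive semidefinite real symmetric d×d matrices. Then tr(a·M) ≥ d·(det a)^(1/d)·(det M)^(1/d). -/
/-!
Write `a = Cᴴ C`. Then `tr (a M) = tr (C M Cᴴ)` and `det (C M Cᴴ) = det a * det M`, and `C M Cᴴ`
is positive semidefinite, so the claim is the scalar AM–GM inequality for its nonnegative
eigenvalues, whose sum is the trace and whose product is the determinant.
-/

open Finset
open scoped MatrixOrder

namespace Matrix.PosSemidef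

variable {n : Type*} [Fintype n] [DecidableEq n] {A B : Matrix n n ℝ}

lemma card_mul_det_rpow_le_trace (hA : A.PosSemidef) :
    (Fintype.card n : ℝ) * A.det ^ ((1 : ℝ) / Fintype.card n) ≤ A.trace := by
  rcases isEmpty_or_nonempty n with hn | hn
  · simp
  have hcard : (0 : ℝ) < Fintype.card n := by exact_mod_cast Fintype.card_pos
  have hdet : A.det = ∏ i, hA.1.eigenvalues i := by
    simpa using hA.1.det_eq_prod_eigenvalues
  have htrace : A.trace = ∑ i, hA.1.eigenvalues i := by
    simpa using hA.1.trace_eq_sum_eigenvalues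
  have amgm := Real.geom_mean_le_arith_mean univ (fun _ ↦ 1) hA.1.eigenvalues
    (fun _ _ ↦ zero_le_one) (by simpa using hcard) (fun i _ ↦ hA.eigenvalues_nonneg i)
  simp only [Real.rpow_one, sum_const, card_univ, nsmul_eq_mul, mul_one, one_mul] at amgm
  rw [hdet, htrace, one_div, ← le_div_iff₀' hcard]
  exact amgm

lemma card_mul_det_mul_det_rpow_le_trace_mul (hA : A.PosSemidef) (hB : B.PosSemidef) :
    (Fintype.card n : ℝ) * (A.det * B.det) ^ ((1 : ℝ) / Fintype.card n) ≤ (A * B).trace := by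
  obtain ⟨C, rfl⟩ := CStarAlgebra.nonneg_iff_eq_star_mul_self.mp hA.nonneg
  have hCBC : (C * B * Cᴴ).PosSemidef := hB.mul_mul_conjTranspose_same C
  have htrace : (star C * C * B).trace = (C * B * Cᴴ).trace := by
    rw [mul_assoc, trace_mul_comm, star_eq_conjTranspose]
  have hdet : (star C * C).det * B.det = (C * B * Cᴴ).det := by
    simp only [det_mul, star_eq_conjTranspose]
    ring
  rw [htrace, hdet]
  exact hCBC.card_mul_det_rpow_le_trace

end Matrix.PosSemidef

theorem matrix_amgm_real_general (d : ℕ)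
    (a M : Matrix (Fin d) (Fin d) ℝ)
    (ha : a.PosSemidef) (hM : M.PosSemidef) :
    (a * M).trace ≥ d * a.det ^ ((1 : ℝ) / d) * M.det ^ ((1 : ℝ) / d) := by
  rw [ge_iff_le, mul_assoc, ← Real.mul_rpow ha.det_nonneg hM.det_nonneg]
  simpa using ha.card_mul_det_mul_det_rpow_le_trace_mul hM

/-- Matrix AM–GM: for positive semidefinite real symmetric `d × d` matrices `a` and `M`,
`tr (a * M) ≥ d * (det a)^(1/d) * (det M)^(1/d)`. -/
theorem matrix_amgm_real (d : ℕ) (hd : 1 ≤ d)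
    (a M : Matrix (Fin d) (Fin d) ℝ)
    (ha : a.PosSemidef) (hM : M.PosSemidef) :
    (a * M).trace ≥ d * a.det ^ ((1 : ℝ) / d) * M.det ^ ((1 : ℝ) / d) :=
  matrix_amgm_real_general d a M ha hM
end

section
/- Let d ≥ 1, let f ≥ 0 be a real number, and let M be a real symmetric d×d matrix such that tr(a·M) + (det a)^(1/d)·f ≤ 0 for every positive semidefinite symmetric d×d matrix a with tr(a) = 1. Then det(−M) ≥ d^(−d)·f^d. -/
/-!
Test the hypothesis with matrices sharing the eigenvectors of `M`: it becomes
`∑ tᵢ μᵢ + (∏ tᵢ)^(1/d) f ≤ 0` for every probability vector `t`, where `μ` are the eigenvalues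
of `M`. Point masses give `μᵢ ≤ 0`. For `δ > 0` the weights `tᵢ ∝ (δ - μᵢ)⁻¹`, i.e.
`a = c_δ (δ - M)⁻¹`, give `∑ tᵢ μᵢ = δ - c_δ d` and `(∏ tᵢ)^(1/d) = c_δ (∏ (δ - μᵢ))^(-1/d)`,
hence `f^d ≤ d^d ∏ (δ - μᵢ)`; letting `δ ↓ 0` gives `f^d ≤ d^d det (-M)`.
-/

open Finset Fintype Unitary
open scoped ComplexOrder

namespace Matrix

variable {n : Type*} [Fintype n] [DecidableEq n]

lemma trace_conjStarAlgAut {R : Type*} [CommRing R] [StarRing R] (u : unitary (Matrix n n R))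
    (A : Matrix n n R) : (conjStarAlgAut R _ u A).trace = A.trace := by
  rw [conjStarAlgAut_apply, trace_mul_cycle, coe_star_mul_self, one_mul]

lemma det_conjStarAlgAut {R : Type*} [CommRing R] [StarRing R] (u : unitary (Matrix n n R))
    (A : Matrix n n R) : (conjStarAlgAut R _ u A).det = A.det := by
  rw [conjStarAlgAut_apply, det_mul_comm, ← mul_assoc, coe_star_mul_self, one_mul]

namespace IsHermitian

variable {𝕜 : Type*} [RCLike 𝕜] {M : Matrix n n 𝕜} (hM : M.IsHermitian)

noncomputable def withEigenvalues (w : n → ℝ) : Matrix n n 𝕜 :=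
  conjStarAlgAut 𝕜 _ hM.eigenvectorUnitary (diagonal (RCLike.ofReal ∘ w))

variable {hM}

lemma posSemidef_withEigenvalues {w : n → ℝ} (hw : 0 ≤ w) :
    (hM.withEigenvalues w).PosSemidef := by
  rw [withEigenvalues, conjStarAlgAut_apply, star_eq_conjTranspose]
  have hdiag : (diagonal (RCLike.ofReal ∘ w : n → 𝕜)).PosSemidef :=
    posSemidef_diagonal_iff.2 fun i => RCLike.ofReal_nonneg.2 (hw i)
  exact hdiag.mul_mul_conjTranspose_same _

lemma trace_withEigenvalues (w : n → ℝ) :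
    (hM.withEigenvalues w).trace = ∑ i, (w i : 𝕜) := by
  rw [withEigenvalues, trace_conjStarAlgAut, trace_diagonal, Function.comp_def]

lemma det_withEigenvalues (w : n → ℝ) :
    (hM.withEigenvalues w).det = ∏ i, (w i : 𝕜) := by
  rw [withEigenvalues, det_conjStarAlgAut, det_diagonal, Function.comp_def]

lemma trace_withEigenvalues_mul (w : n → ℝ) :
    (hM.withEigenvalues w * M).trace = ∑ i, (w i * hM.eigenvalues i : 𝕜) := by
  conv_lhs => arg 1; arg 2; rw [hM.spectral_theorem]
  rw [withEigenvalues, ← map_mul, trace_conjStarAlgAut, diagonal_mul_diagonal, trace_diagonal]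
  simp

end IsHermitian

end Matrix

variable {ι : Type*} [Fintype ι]

/-- The hypothesis of the theorem, read in an eigenbasis of `M` with eigenvalues `μ`. -/
def BellmanIneq (μ : ι → ℝ) (f : ℝ) : Prop :=
  ∀ t : ι → ℝ, 0 ≤ t → ∑ i, t i = 1 →
    ∑ i, t i * μ i + (∏ i, t i) ^ ((1 : ℝ) / card ι) * f ≤ 0

namespace BellmanIneq

variable {μ : ι → ℝ} {f : ℝ}

lemma nonpos (h : BellmanIneq μ f) (hf : 0 ≤ f) (i : ι) : μ i ≤ 0 := by
  classical
  have hsingle : 0 ≤ (Pi.single i 1 : ι → ℝ) := Pi.single_nonneg.2 zero_le_one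
  have hi := h _ hsingle (by simp)
  have hroot :=
    mul_nonneg (Real.rpow_nonneg (univ.prod_nonneg fun j _ => hsingle j) ((1 : ℝ) / card ι)) hf
  have hlin : ∑ j, (Pi.single i 1 : ι → ℝ) j * μ j = μ i := by simp [Pi.single_apply]
  linarith

lemma pow_le_prod_sub [Nonempty ι] (h : BellmanIneq μ f) (hf : 0 ≤ f) {δ : ℝ} (hδ : 0 < δ) :
    f ^ card ι ≤ card ι ^ card ι * ∏ i, (δ - μ i) := by
  set d := card ι
  have hd : d ≠ 0 := card_ne_zero
  have hgap : ∀ i, 0 < δ - μ i := fun i => by linarith [h.nonpos hf i]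
  set S := ∑ i, (δ - μ i)⁻¹
  have hS : 0 < S := sum_pos (fun i _ => inv_pos.2 (hgap i)) univ_nonempty
  set P := ∏ i, (δ - μ i)
  have hP : 0 < P := prod_pos fun i _ => hgap i
  have key := h (fun i => (δ - μ i)⁻¹ / S) (fun i => by have := hgap i; positivity)
    (by rw [← sum_div, div_self hS.ne'])
  have hlin : ∑ i, (δ - μ i)⁻¹ / S * μ i = δ - d / S := by
    have hterm : ∀ i, (δ - μ i)⁻¹ / S * μ i = δ * ((δ - μ i)⁻¹ / S) - 1 / S := fun i => by
      field_simp [(hgap i).ne']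
      ring
    rw [sum_congr rfl fun i _ => hterm i, sum_sub_distrib, ← mul_sum, ← sum_div, div_self hS.ne',
      sum_const, card_univ, nsmul_eq_mul]
    ring
  have hprod : (∏ i, (δ - μ i)⁻¹ / S) ^ ((1 : ℝ) / d) = P⁻¹ ^ ((1 : ℝ) / d) / S := by
    rw [prod_div_distrib, prod_inv_distrib, prod_const, card_univ,
      Real.div_rpow (by positivity) (by positivity), one_div, Real.pow_rpow_inv_natCast hS.le hd]
  rw [hlin, hprod] at key
  have hroot : P⁻¹ ^ ((1 : ℝ) / d) * f ≤ d := by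
    have : P⁻¹ ^ ((1 : ℝ) / d) * f / S ≤ d / S := by
      linarith [div_mul_eq_mul_div (P⁻¹ ^ ((1 : ℝ) / d)) S f]
    exact (div_le_div_iff_of_pos_right hS).1 this
  have hpow := pow_le_pow_left₀ (by positivity) hroot d
  rw [mul_pow, one_div, Real.rpow_inv_natCast_pow (by positivity) hd, inv_mul_le_iff₀ hP] at hpow
  linarith

lemma pow_le_prod_neg [Nonempty ι] (h : BellmanIneq μ f) (hf : 0 ≤ f) :
    f ^ card ι ≤ card ι ^ card ι * ∏ i, -μ i := by
  have hcont : Continuous fun δ : ℝ => (card ι : ℝ) ^ card ι * ∏ i, (δ - μ i) := by fun_prop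
  simpa using ContinuousWithinAt.closure_le (s := Set.Ioi 0) (x := 0) (by simp)
    continuousWithinAt_const hcont.continuousWithinAt fun δ hδ => h.pow_le_prod_sub hf hδ

end BellmanIneq

lemma Matrix.IsHermitian.bellmanIneq_eigenvalues {n : Type*} [Fintype n] [DecidableEq n]
    {M : Matrix n n ℝ} (hM : M.IsHermitian) {f : ℝ}
    (h : ∀ a : Matrix n n ℝ, a.PosSemidef → a.trace = 1 →
      (a * M).trace + a.det ^ ((1 : ℝ) / card n) * f ≤ 0) :
    BellmanIneq hM.eigenvalues f := fun t ht hsum => by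
  simpa [trace_withEigenvalues_mul, det_withEigenvalues] using
    h (hM.withEigenvalues t) (posSemidef_withEigenvalues ht)
      (by simpa [trace_withEigenvalues] using hsum)

theorem det_neg_ge_of_bellman_general (d : ℕ) (f : ℝ) (hf : 0 ≤ f)
    (M : Matrix (Fin d) (Fin d) ℝ) (hMsymm : M.IsSymm)
    (h : ∀ a : Matrix (Fin d) (Fin d) ℝ, a.PosSemidef → a.trace = 1 →
      (a * M).trace + a.det ^ ((1 : ℝ) / d) * f ≤ 0) :
    (-M).det ≥ (d : ℝ) ^ (-(d : ℤ)) * f ^ d := by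
  rcases Nat.eq_zero_or_pos d with rfl | hd
  · simp
  have : Nonempty (Fin d) := Fin.pos_iff_nonempty.1 hd
  have hM : M.IsHermitian := Matrix.isHermitian_iff_isSymm.2 hMsymm
  have hbound := (hM.bellmanIneq_eigenvalues (by simpa using h)).pow_le_prod_neg hf
  have hdet : (-M).det = ∏ i, -hM.eigenvalues i := by
    rw [Matrix.det_neg, hM.det_eq_prod_eigenvalues, prod_neg]
    simp
  rw [ge_iff_le, hdet, zpow_neg, zpow_natCast, inv_mul_le_iff₀ (by positivity)]
  simpa using hbound

/-- If a real symmetric matrix `M` satisfies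
`tr (a * M) + (det a)^(1/d) * f ≤ 0` for every PSD symmetric `a` with `tr a = 1`
(where `f ≥ 0`), then `det (−M) ≥ d^(−d) * f^d`. -/
theorem det_neg_ge_of_bellman (d : ℕ) (hd : 1 ≤ d) (f : ℝ) (hf : 0 ≤ f)
    (M : Matrix (Fin d) (Fin d) ℝ) (hMsymm : M.IsSymm)
    (h : ∀ a : Matrix (Fin d) (Fin d) ℝ, a.PosSemidef → a.trace = 1 →
      (a * M).trace + a.det ^ ((1 : ℝ) / d) * f ≤ 0) :
    (-M).det ≥ (d : ℝ) ^ (-(d : ℤ)) * f ^ d :=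
  det_neg_ge_of_bellman_general d f hf M hMsymm h
end

section
/- Let d ≥ 1, let f ≥ 0, and let M be a real symmetric d×d matrix. Then sup over all positive semidefinite symmetric d×d matrices a with tr(a) = 1 of [tr(a·M) + (det a)^(1/d)·f] equals 0 if and only if M is negative semidefinite and det(−M) = d^(−d)·f^d. -/
/-!
Write `N = -M`, `d = card n` and `q a = (det a)^(1/d)`. Applying the scalar AM-GM inequality to the
eigenvalues of `√a N √a` gives, for positive semidefinite `a` and `N`,
`tr (a N) ≥ d q(a) (det N)^(1/d)`, hence `tr (a M) + q(a) f ≤ q(a) (f - d (det N)^(1/d))`.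

If `N ≥ 0` and `f = d (det N)^(1/d)`, the objective is therefore `≤ 0`, and `0` is attained at
`a ∝ N⁻¹` when `f > 0` and at the projection onto a vector of `ker N` when `f = 0`.
Conversely, if the supremum is `0`: rank-one `a` force `N ≥ 0`; testing `a ∝ (N + ε)⁻¹` and
letting `ε → 0` gives `f ≤ d (det N)^(1/d)`; and if this inequality were strict, then `N ≥ μ > 0`,
so the objective is bounded both by `-μ + q f` and by `-q (d (det N)^(1/d) - f)`, hence by a
negative constant.
-/

open Matrix Finset Filter Topology
open scoped MatrixOrder

namespace Matrix

variable {n : Type*} [Fintype n] [DecidableEq n]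

namespace PosSemidef

variable {a b : Matrix n n ℝ}

theorem exists_posSemidef_trace_eq_det_eq (ha : a.PosSemidef) (hb : b.PosSemidef) :
    ∃ c : Matrix n n ℝ, c.PosSemidef ∧ (a * b).trace = c.trace ∧ (a * b).det = c.det := by
  set s := CFC.sqrt a
  have hs : s.PosSemidef := (CFC.sqrt_nonneg a).posSemidef
  have hss : s * s = a := CFC.sqrt_mul_sqrt_self a ha.nonneg
  refine ⟨s * b * s, by simpa only [hs.1.eq] using hb.mul_mul_conjTranspose_same s, ?_, ?_⟩
  · rw [← hss, Matrix.mul_assoc, trace_mul_comm, Matrix.mul_assoc]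
  · rw [← hss]; simp only [det_mul]; ring

theorem trace_mul_nonneg (ha : a.PosSemidef) (hb : b.PosSemidef) : 0 ≤ (a * b).trace := by
  obtain ⟨c, hc, htr, -⟩ := exists_posSemidef_trace_eq_det_eq ha hb
  exact htr ▸ hc.trace_nonneg

theorem mul_trace_le_trace_mul {N : Matrix n n ℝ} {μ : ℝ} (ha : a.PosSemidef)
    (hN : (N - μ • 1).PosSemidef) : μ * a.trace ≤ (a * N).trace := by
  have h := trace_mul_nonneg ha hN
  rwa [Matrix.mul_sub, trace_sub, Matrix.mul_smul, Matrix.mul_one, trace_smul, smul_eq_mul,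
    sub_nonneg] at h

variable [Nonempty n]

theorem card_mul_det_rpow_le_trace_s4 (ha : a.PosSemidef) :
    Fintype.card n * a.det ^ ((1 : ℝ) / Fintype.card n) ≤ a.trace := by
  have hd : (0 : ℝ) < Fintype.card n := by exact_mod_cast Fintype.card_pos
  have amgm := Real.geom_mean_le_arith_mean univ (fun _ => 1) ha.1.eigenvalues
    (fun _ _ => zero_le_one) (by simpa using hd) (fun i _ => ha.eigenvalues_nonneg i)
  simp only [Real.rpow_one, one_mul, sum_const, card_univ, nsmul_eq_mul, mul_one] at amgm
  rw [ha.1.det_eq_prod_eigenvalues, ha.1.trace_eq_sum_eigenvalues, one_div]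
  simp only [RCLike.ofReal_real_eq_id, id]
  rw [le_div_iff₀ hd] at amgm
  linarith

theorem card_mul_det_rpow_mul_le_trace_mul (ha : a.PosSemidef) (hb : b.PosSemidef) :
    Fintype.card n * (a.det ^ ((1 : ℝ) / Fintype.card n) * b.det ^ ((1 : ℝ) / Fintype.card n))
      ≤ (a * b).trace := by
  obtain ⟨c, hc, htr, hdet⟩ := exists_posSemidef_trace_eq_det_eq ha hb
  rw [← Real.mul_rpow ha.det_nonneg hb.det_nonneg, ← det_mul, hdet, htr]
  exact card_mul_det_rpow_le_trace_s4 hc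

end PosSemidef

theorem IsHermitian.posSemidef_sub_smul_one {N : Matrix n n ℝ} (hN : N.IsHermitian) {μ : ℝ}
    (hμ : ∀ i, μ ≤ hN.eigenvalues i) : (N - μ • 1).PosSemidef := by
  have h : algebraMap ℝ (Matrix n n ℝ) μ ≤ N := by
    refine algebraMap_le_of_le_spectrum (fun x hx => ?_) hN.isSelfAdjoint
    obtain ⟨i, rfl⟩ := hN.spectrum_real_eq_range_eigenvalues ▸ hx
    exact hμ i
  rwa [Algebra.algebraMap_eq_smul_one] at h

theorem PosDef.exists_pos_posSemidef_sub_smul_one [Nonempty n] {N : Matrix n n ℝ}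
    (hN : N.PosDef) : ∃ μ : ℝ, 0 < μ ∧ (N - μ • 1).PosSemidef :=
  ⟨univ.inf' univ_nonempty hN.1.eigenvalues,
    (lt_inf'_iff _).2 fun i _ => hN.eigenvalues_pos i,
    hN.1.posSemidef_sub_smul_one fun i => inf'_le _ (mem_univ i)⟩

end Matrix

theorem Real.natCast_mul_rpow_inv_eq_iff {x y : ℝ} (hx : 0 ≤ x) (hy : 0 ≤ y) {k : ℕ}
    (hk : k ≠ 0) : k * x ^ ((1 : ℝ) / k) = y ↔ x = (k : ℝ) ^ (-(k : ℤ)) * y ^ k := by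
  have hk' : (k : ℝ) ≠ 0 := Nat.cast_ne_zero.2 hk
  rw [_root_.zpow_neg, zpow_natCast, inv_mul_eq_div, ← div_pow, one_div]
  constructor
  · rintro rfl
    rw [mul_div_cancel_left₀ _ hk', Real.rpow_inv_natCast_pow hx hk]
  · rintro rfl
    rw [Real.pow_rpow_inv_natCast (div_nonneg hy (Nat.cast_nonneg k)) hk, mul_div_cancel₀ _ hk']

section

variable {n : Type*} [Fintype n]

def densityMatrices (n : Type*) [Fintype n] : Set (Matrix n n ℝ) :=
  {a | a.PosSemidef ∧ a.trace = 1}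

theorem inv_trace_smul_mem_densityMatrices {P : Matrix n n ℝ} (hP : P.PosSemidef)
    (htr : P.trace ≠ 0) : P.trace⁻¹ • P ∈ densityMatrices n :=
  ⟨hP.smul (inv_nonneg.2 hP.trace_nonneg), by rw [trace_smul, smul_eq_mul, inv_mul_cancel₀ htr]⟩

theorem exists_mem_densityMatrices_trace_mul_eq {x : n → ℝ} (hx : x ≠ 0) (M : Matrix n n ℝ) :
    ∃ a ∈ densityMatrices n, (a * M).trace = (x ⬝ᵥ x)⁻¹ * (x ⬝ᵥ (M *ᵥ x)) := by
  have hP : (vecMulVec x x).PosSemidef := by simpa using posSemidef_vecMulVec_self_star x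
  refine ⟨_, inv_trace_smul_mem_densityMatrices hP (by simpa using hx), ?_⟩
  rw [Matrix.smul_mul, trace_smul, vecMulVec_mul, trace_vecMulVec, trace_vecMulVec, smul_eq_mul,
    dotProduct_comm x (x ᵥ* M), ← dotProduct_mulVec]

variable [DecidableEq n]

noncomputable def bellmanObjective (M : Matrix n n ℝ) (f : ℝ) (a : Matrix n n ℝ) : ℝ :=
  (a * M).trace + a.det ^ ((1 : ℝ) / Fintype.card n) * f

variable {M : Matrix n n ℝ} {f : ℝ}

theorem bellmanObjective_le_neg_add {μ : ℝ} (hμ : (-M - μ • 1).PosSemidef) {a : Matrix n n ℝ}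
    (ha : a ∈ densityMatrices n) :
    bellmanObjective M f a ≤ -μ + a.det ^ ((1 : ℝ) / Fintype.card n) * f := by
  have h := ha.1.mul_trace_le_trace_mul hμ
  rw [ha.2, mul_one, Matrix.mul_neg, trace_neg] at h
  unfold bellmanObjective
  linarith

theorem posSemidef_neg_of_bellmanObjective_nonpos (hM : M.IsHermitian) (hf : 0 ≤ f)
    (hle : ∀ a ∈ densityMatrices n, bellmanObjective M f a ≤ 0) : (-M).PosSemidef := by
  refine .of_dotProduct_mulVec_nonneg hM.neg fun x => ?_
  rcases eq_or_ne x 0 with rfl | hx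
  · simp
  obtain ⟨a, ha, htr⟩ := exists_mem_densityMatrices_trace_mul_eq hx M
  have hxx : 0 < x ⬝ᵥ x := by simpa using dotProduct_star_self_pos_iff.2 hx
  have hq : 0 ≤ a.det ^ ((1 : ℝ) / Fintype.card n) * f :=
    mul_nonneg (Real.rpow_nonneg ha.1.det_nonneg _) hf
  have h := hle a ha
  rw [bellmanObjective, htr] at h
  have : x ⬝ᵥ (M *ᵥ x) ≤ 0 := nonpos_of_mul_nonpos_right (by linarith) (inv_pos.2 hxx)
  simpa [neg_mulVec, dotProduct_neg]

variable [Nonempty n]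

theorem densityMatrices_nonempty : (densityMatrices n).Nonempty :=
  ⟨_, inv_trace_smul_mem_densityMatrices PosSemidef.one (by simp)⟩

theorem det_rpow_le_one_of_mem_densityMatrices {a : Matrix n n ℝ} (ha : a ∈ densityMatrices n) :
    a.det ^ ((1 : ℝ) / Fintype.card n) ≤ 1 := by
  have h := ha.1.card_mul_det_rpow_le_trace_s4
  have hd : (1 : ℝ) ≤ Fintype.card n := by exact_mod_cast Fintype.card_pos
  rw [ha.2] at h
  nlinarith [Real.rpow_nonneg ha.1.det_nonneg ((1 : ℝ) / Fintype.card n)]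

theorem bddAbove_bellmanObjective (hM : M.IsHermitian) (hf : 0 ≤ f) :
    BddAbove (bellmanObjective M f '' densityMatrices n) := by
  have hN := hM.neg
  refine ⟨-univ.inf' univ_nonempty hN.eigenvalues + f, ?_⟩
  rintro _ ⟨a, ha, rfl⟩
  have h := bellmanObjective_le_neg_add (f := f) (μ := univ.inf' univ_nonempty hN.eigenvalues)
    (hN.posSemidef_sub_smul_one fun i => inf'_le _ (mem_univ i)) ha
  have := mul_le_of_le_one_left hf (det_rpow_le_one_of_mem_densityMatrices ha)
  linarith

theorem bellmanObjective_le_mul_sub (hN : (-M).PosSemidef) {a : Matrix n n ℝ}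
    (ha : a.PosSemidef) :
    bellmanObjective M f a ≤ a.det ^ ((1 : ℝ) / Fintype.card n) *
      (f - Fintype.card n * (-M).det ^ ((1 : ℝ) / Fintype.card n)) := by
  have h := ha.card_mul_det_rpow_mul_le_trace_mul hN
  rw [Matrix.mul_neg, trace_neg] at h
  unfold bellmanObjective
  linarith

theorem trace_inv_mul_bellmanObjective {P : Matrix n n ℝ} (hP : P.PosDef) :
    P⁻¹.trace * bellmanObjective M f (P⁻¹.trace⁻¹ • P⁻¹) =
      (P⁻¹ * M).trace + f / P.det ^ ((1 : ℝ) / Fintype.card n) := by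
  have hs := hP.inv.trace_pos
  have hdet := hP.det_pos
  have hk : Fintype.card n ≠ 0 := Fintype.card_ne_zero
  unfold bellmanObjective
  rw [det_smul, det_nonsing_inv, Ring.inverse_eq_inv', inv_pow, Matrix.smul_mul, trace_smul,
    smul_eq_mul, Real.mul_rpow (by positivity) (by positivity), one_div,
    Real.inv_rpow (by positivity), Real.pow_rpow_inv_natCast hs.le hk, Real.inv_rpow hdet.le]
  field_simp

theorem le_card_mul_det_rpow_of_bellmanObjective_nonpos (hN : (-M).PosSemidef)
    (hle : ∀ a ∈ densityMatrices n, bellmanObjective M f a ≤ 0) :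
    f ≤ Fintype.card n * (-M).det ^ ((1 : ℝ) / Fintype.card n) := by
  have hreg : ∀ ε ∈ Set.Ioi (0 : ℝ),
      f ≤ Fintype.card n * (-M + ε • 1).det ^ ((1 : ℝ) / Fintype.card n) := by
    intro ε hε
    set P := -M + ε • 1 with hP_def
    have hP : P.PosDef := PosDef.posSemidef_add hN (PosDef.one.smul hε)
    have hs := hP.inv.trace_pos
    have hD := Real.rpow_pos_of_pos hP.det_pos ((1 : ℝ) / Fintype.card n)
    have htr : (P⁻¹ * M).trace = ε * P⁻¹.trace - Fintype.card n := by
      rw [show M = ε • 1 - P by rw [hP_def]; abel, Matrix.mul_sub, Matrix.mul_smul, Matrix.mul_one,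
        nonsing_inv_mul _ hP.det_pos.ne'.isUnit, trace_sub, trace_smul, trace_one, smul_eq_mul]
    have h := mul_nonpos_of_nonneg_of_nonpos hs.le
      (hle _ (inv_trace_smul_mem_densityMatrices hP.inv.posSemidef hs.ne'))
    rw [trace_inv_mul_bellmanObjective hP, htr] at h
    have : f / P.det ^ ((1 : ℝ) / Fintype.card n) ≤ Fintype.card n := by
      nlinarith [mul_pos (Set.mem_Ioi.1 hε) hs]
    rw [div_le_iff₀ hD] at this
    linarith
  have hcont : Tendsto (fun ε : ℝ => Fintype.card n * (-M + ε • 1).det ^ ((1 : ℝ) / Fintype.card n))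
      (𝓝[>] 0) (𝓝 (Fintype.card n * (-M).det ^ ((1 : ℝ) / Fintype.card n))) := by
    have hdet : Continuous fun ε : ℝ => (-M + ε • 1).det := by fun_prop
    have hpow : (0 : ℝ) ≤ 1 / Fintype.card n := by positivity
    have := ((hdet.rpow_const fun _ => Or.inr hpow).const_mul (Fintype.card n : ℝ)).tendsto 0
    simpa using this.mono_left nhdsWithin_le_nhds
  exact ge_of_tendsto hcont (eventually_nhdsWithin_of_forall hreg)

theorem posDef_neg_of_card_mul_det_rpow_pos (hN : (-M).PosSemidef)
    (hpos : 0 < Fintype.card n * (-M).det ^ ((1 : ℝ) / Fintype.card n)) : (-M).PosDef :=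
  hN.posDef_iff_det_ne_zero.2 fun h0 => by
    rw [h0, Real.zero_rpow (by positivity), mul_zero] at hpos
    exact hpos.false

theorem card_mul_det_rpow_le_of_sSup_eq_zero (hN : (-M).PosSemidef) (hf : 0 ≤ f)
    (hsup : sSup (bellmanObjective M f '' densityMatrices n) = 0) :
    Fintype.card n * (-M).det ^ ((1 : ℝ) / Fintype.card n) ≤ f := by
  by_contra! hlt
  obtain ⟨c, hc_def⟩ : ∃ c, c = Fintype.card n * (-M).det ^ ((1 : ℝ) / Fintype.card n) - f :=
    ⟨_, rfl⟩
  have hc : 0 < c := by linarith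
  obtain ⟨μ, hμ, hμN⟩ :=
    (posDef_neg_of_card_mul_det_rpow_pos hN (by linarith)).exists_pos_posSemidef_sub_smul_one
  have hbound : ∀ x ∈ bellmanObjective M f '' densityMatrices n, x ≤ -(μ * c) / (c + f) := by
    rintro _ ⟨a, ha, rfl⟩
    have h1 := bellmanObjective_le_mul_sub (f := f) hN ha.1
    have h2 := bellmanObjective_le_neg_add (f := f) hμN ha
    rw [show f - Fintype.card n * (-M).det ^ ((1 : ℝ) / Fintype.card n) = -c by linarith] at h1
    rw [le_div_iff₀ (by positivity)]
    linarith [mul_le_mul_of_nonneg_left h1 hf, mul_le_mul_of_nonneg_left h2 hc.le]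
  have h := csSup_le (densityMatrices_nonempty.image _) hbound
  rw [hsup, le_div_iff₀ (by positivity)] at h
  nlinarith

theorem exists_bellmanObjective_eq_zero (hN : (-M).PosSemidef) (hf : 0 ≤ f)
    (hD : Fintype.card n * (-M).det ^ ((1 : ℝ) / Fintype.card n) = f) :
    ∃ a ∈ densityMatrices n, bellmanObjective M f a = 0 := by
  rcases hf.eq_or_lt with rfl | hf
  · have hdet : (-M).det = 0 :=
      ((Real.rpow_eq_zero_iff_of_nonneg hN.det_nonneg).1
        ((mul_eq_zero.1 hD).resolve_left (by simp))).1
    obtain ⟨x, hx, hMx⟩ := exists_mulVec_eq_zero_iff.2 hdet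
    obtain ⟨a, ha, htr⟩ := exists_mem_densityMatrices_trace_mul_eq hx M
    refine ⟨a, ha, ?_⟩
    rw [neg_mulVec, neg_eq_zero] at hMx
    rw [bellmanObjective, htr, hMx]
    simp
  · have hP := posDef_neg_of_card_mul_det_rpow_pos hN (hD ▸ hf)
    have hD0 := Real.rpow_pos_of_pos hP.det_pos ((1 : ℝ) / Fintype.card n)
    have hs := hP.inv.trace_pos
    refine ⟨_, inv_trace_smul_mem_densityMatrices hP.inv.posSemidef hs.ne', ?_⟩
    have h := trace_inv_mul_bellmanObjective (M := M) (f := f) hP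
    have htr : ((-M)⁻¹ * M).trace = -Fintype.card n := by
      rw [← neg_neg M, Matrix.mul_neg, neg_neg, nonsing_inv_mul _ hP.det_pos.ne'.isUnit, trace_neg,
        trace_one]
    have hfD : f / (-M).det ^ ((1 : ℝ) / Fintype.card n) = Fintype.card n := by
      rw [← hD, mul_div_assoc, div_self hD0.ne', mul_one]
    rw [htr, hfD, neg_add_cancel] at h
    exact (mul_eq_zero.1 h).resolve_left hs.ne'

theorem sSup_bellmanObjective_eq_zero_iff (hM : M.IsHermitian) (hf : 0 ≤ f) :
    sSup (bellmanObjective M f '' densityMatrices n) = 0 ↔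
      (-M).PosSemidef ∧ Fintype.card n * (-M).det ^ ((1 : ℝ) / Fintype.card n) = f := by
  constructor
  · intro hsup
    have hle : ∀ a ∈ densityMatrices n, bellmanObjective M f a ≤ 0 := fun a ha =>
      hsup ▸ le_csSup (bddAbove_bellmanObjective hM hf) (Set.mem_image_of_mem _ ha)
    have hN := posSemidef_neg_of_bellmanObjective_nonpos hM hf hle
    exact ⟨hN, le_antisymm (card_mul_det_rpow_le_of_sSup_eq_zero hN hf hsup)
      (le_card_mul_det_rpow_of_bellmanObjective_nonpos hN hle)⟩
  · rintro ⟨hN, hD⟩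
    obtain ⟨a, ha, h0⟩ := exists_bellmanObjective_eq_zero hN hf hD
    refine IsGreatest.csSup_eq ⟨⟨a, ha, h0⟩, ?_⟩
    rintro _ ⟨b, hb, rfl⟩
    have h := bellmanObjective_le_mul_sub (f := f) hN hb.1
    rwa [hD, sub_self, mul_zero] at h

end

/-- The Bellman equation
`sup_{a PSD symmetric, tr a = 1} [tr (a * M) + (det a)^(1/d) * f] = 0`
holds iff `M` is negative semidefinite and `det (−M) = d^(−d) * f^d`. -/
theorem bellman_iff_mongeAmpere (d : ℕ) (hd : 1 ≤ d) (f : ℝ) (hf : 0 ≤ f)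
    (M : Matrix (Fin d) (Fin d) ℝ) (hMsymm : M.IsSymm) :
    sSup ((fun a : Matrix (Fin d) (Fin d) ℝ =>
        (a * M).trace + a.det ^ ((1 : ℝ) / d) * f) ''
      {a : Matrix (Fin d) (Fin d) ℝ | a.PosSemidef ∧ a.trace = 1}) = 0 ↔
    (-M).PosSemidef ∧ (-M).det = (d : ℝ) ^ (-(d : ℤ)) * f ^ d := by
  have : Nonempty (Fin d) := ⟨⟨0, hd⟩⟩
  have hobj : bellmanObjective M f = fun a => (a * M).trace + a.det ^ ((1 : ℝ) / d) * f := by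
    funext a
    simp only [bellmanObjective, Fintype.card_fin]
  have h := sSup_bellmanObjective_eq_zero_iff (isHermitian_iff_isSymm.2 hMsymm) hf
  rw [hobj, Fintype.card_fin] at h
  rw [← densityMatrices, h]
  exact and_congr_right fun hN =>
    Real.natCast_mul_rpow_inv_eq_iff hN.det_nonneg hf (by omega)
end

section
/- Let d ≥ 2 and f ≥ 0 a real number, and let M be a real symmetric d×d matrix which is negative semidefinite with det(−M) = d^(−d)·f^d. Then for every positive semidefinite symmetric d×d matrix a with tr(a) = 1, tr(a·M) + (det a)^(1/d)·f ≤ 0. -/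
/-!
With `s = √a`, the matrix `s (-M) s` is positive semidefinite, has trace `-tr (a M)` and
determinant `det a · det (-M) = det a · (f/d)^d`; AM–GM on its eigenvalues gives
`-tr (a M) ≥ d (det a)^(1/d) · f/d`.
-/

open Matrix Finset
open scoped MatrixOrder

namespace Matrix

variable {n : Type*} [Fintype n] [DecidableEq n]

theorem PosSemidef.card_mul_det_rpow_le_trace_s18 {P : Matrix n n ℝ} (hP : P.PosSemidef) :
    (Fintype.card n : ℝ) * P.det ^ ((1 : ℝ) / Fintype.card n) ≤ P.trace := by
  rcases isEmpty_or_nonempty n with _ | _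
  · simp
  have hcard : (0 : ℝ) < Fintype.card n := by exact_mod_cast Fintype.card_pos
  have amgm := Real.geom_mean_le_arith_mean univ (fun _ ↦ 1) hP.1.eigenvalues
    (fun _ _ ↦ zero_le_one) (by simpa using hcard) (fun i _ ↦ hP.eigenvalues_nonneg i)
  simp only [Real.rpow_one, one_mul, sum_const, card_univ, nsmul_eq_mul, mul_one] at amgm
  rw [hP.1.det_eq_prod_eigenvalues, hP.1.trace_eq_sum_eigenvalues]
  simp only [RCLike.ofReal_real_eq_id, id_eq, one_div]
  rw [le_div_iff₀ hcard] at amgm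
  linarith

theorem PosSemidef.card_mul_det_mul_rpow_le_trace_mul {A B : Matrix n n ℝ}
    (hA : A.PosSemidef) (hB : B.PosSemidef) :
    (Fintype.card n : ℝ) * (A.det * B.det) ^ ((1 : ℝ) / Fintype.card n) ≤ (A * B).trace := by
  set s := CFC.sqrt A
  have hss : s * s = A := CFC.sqrt_mul_sqrt_self A hA.nonneg
  have hsB : (s * B * s).PosSemidef := by
    have hs : sᴴ = s := (CFC.sqrt_nonneg A).posSemidef.1
    simpa only [hs] using hB.mul_mul_conjTranspose_same s
  have htrace : (s * B * s).trace = (A * B).trace := by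
    rw [trace_mul_cycle, hss]
  have hdet : (s * B * s).det = A.det * B.det := by
    rw [← hss, det_mul, det_mul, det_mul]
    ring
  simpa [htrace, hdet] using hsB.card_mul_det_rpow_le_trace_s18

end Matrix

/-- If `M` is real symmetric negative semidefinite with `det (−M) = d^(−d) f^d`
(`f ≥ 0`, `d ≥ 2`), then for every PSD symmetric `a` with `tr a = 1`,
`tr (a * M) + (det a)^(1/d) * f ≤ 0`. -/
theorem bellman_of_mongeAmpere (d : ℕ) (hd : 2 ≤ d) (f : ℝ) (hf : 0 ≤ f)
    (M : Matrix (Fin d) (Fin d) ℝ) (hM : (-M).PosSemidef)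
    (hdet : (-M).det = (d : ℝ) ^ (-(d : ℤ)) * f ^ d) :
    ∀ a : Matrix (Fin d) (Fin d) ℝ, a.PosSemidef → a.trace = 1 →
      (a * M).trace + a.det ^ ((1 : ℝ) / d) * f ≤ 0 := by
  intro a ha _
  have hdetM : (-M).det ^ ((1 : ℝ) / d) = (d : ℝ)⁻¹ * f := by
    rw [hdet, _root_.zpow_neg, zpow_natCast, ← inv_pow, ← mul_pow, one_div,
      Real.pow_rpow_inv_natCast (by positivity) (by omega)]
  have amgm := ha.card_mul_det_mul_rpow_le_trace_mul hM
  rw [Fintype.card_fin, Real.mul_rpow ha.det_nonneg hM.det_nonneg, hdetM, mul_neg,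
    trace_neg] at amgm
  field_simp at amgm
  linarith
end

section
/- Let a be a Hermitian positive semidefinite d×d complex matrix and M a Hermitian positive semidefinite d×d complex matrix. Then Re tr(a·M) = tr(a·M) is real and tr(a·M) ≥ d·(det a)^(1/d)·(det M)^(1/d), where det a and det M are nonnegative reals. -/
open scoped ComplexOrder

/-! Writing `M = Bᴴ B`, the matrix `N = B a Bᴴ` is positive semidefinite with `tr N = tr (a M)`
and `det N = det a · det M`; the inequality is then AM–GM for the eigenvalues of `N`. -/

theorem Real.card_mul_prod_rpow_inv_card_le_sum {ι : Type*} (s : Finset ι) {z : ι → ℝ}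
    (hz : ∀ i ∈ s, 0 ≤ z i) :
    (s.card : ℝ) * (∏ i ∈ s, z i) ^ ((1 : ℝ) / s.card) ≤ ∑ i ∈ s, z i := by
  rcases s.eq_empty_or_nonempty with rfl | hs
  · simp
  have hcard : (0 : ℝ) < s.card := by exact_mod_cast hs.card_pos
  have amgm := Real.geom_mean_le_arith_mean_weighted s (fun _ ↦ 1 / (s.card : ℝ)) z
    (fun _ _ ↦ by positivity) (by simp [hcard.ne']) hz
  rw [Real.finsetProd_rpow s z hz, ← Finset.mul_sum] at amgm
  calc (s.card : ℝ) * (∏ i ∈ s, z i) ^ ((1 : ℝ) / s.card)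
      ≤ s.card * (1 / s.card * ∑ i ∈ s, z i) := by gcongr
    _ = ∑ i ∈ s, z i := by field_simp

namespace Matrix

variable {n 𝕜 : Type*} [Fintype n] [RCLike 𝕜]

theorem PosSemidef.card_mul_re_det_rpow_le_re_trace [DecidableEq n] {A : Matrix n n 𝕜}
    (hA : A.PosSemidef) :
    Fintype.card n * RCLike.re A.det ^ ((1 : ℝ) / Fintype.card n) ≤ RCLike.re A.trace := by
  rw [hA.1.det_eq_prod_eigenvalues, hA.1.trace_eq_sum_eigenvalues, ← RCLike.ofReal_prod,
    ← RCLike.ofReal_sum, RCLike.ofReal_re, RCLike.ofReal_re]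
  exact Real.card_mul_prod_rpow_inv_card_le_sum _ fun i _ ↦ hA.eigenvalues_nonneg i

open scoped MatrixOrder in
theorem PosSemidef.exists_posSemidef_trace_eq_trace_mul_det_eq_det_mul [DecidableEq n]
    {a M : Matrix n n 𝕜} (ha : a.PosSemidef) (hM : M.PosSemidef) :
    ∃ N : Matrix n n 𝕜, N.PosSemidef ∧ N.trace = (a * M).trace ∧ N.det = a.det * M.det := by
  obtain ⟨B, rfl⟩ := CStarAlgebra.nonneg_iff_eq_star_mul_self.mp hM.nonneg
  refine ⟨B * a * Bᴴ, ha.mul_mul_conjTranspose_same B, ?_, ?_⟩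
  · rw [trace_mul_cycle, trace_mul_comm, star_eq_conjTranspose]
  · rw [det_mul, det_mul, det_mul, star_eq_conjTranspose]
    ring

theorem PosSemidef.im_trace_mul_eq_zero {a M : Matrix n n 𝕜}
    (ha : a.PosSemidef) (hM : M.PosSemidef) : RCLike.im (a * M).trace = 0 := by
  classical
  obtain ⟨N, hN, htr, -⟩ := ha.exists_posSemidef_trace_eq_trace_mul_det_eq_det_mul hM
  exact htr ▸ (RCLike.nonneg_iff.mp hN.trace_nonneg).2

theorem PosSemidef.card_mul_re_det_rpow_mul_re_det_rpow_le_re_trace_mul [DecidableEq n]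
    {a M : Matrix n n 𝕜} (ha : a.PosSemidef) (hM : M.PosSemidef) :
    Fintype.card n * RCLike.re a.det ^ ((1 : ℝ) / Fintype.card n) *
      RCLike.re M.det ^ ((1 : ℝ) / Fintype.card n) ≤ RCLike.re (a * M).trace := by
  obtain ⟨N, hN, htr, hdet⟩ := ha.exists_posSemidef_trace_eq_trace_mul_det_eq_det_mul hM
  obtain ⟨ha_re, ha_im⟩ := RCLike.nonneg_iff.mp ha.det_nonneg
  obtain ⟨hM_re, -⟩ := RCLike.nonneg_iff.mp hM.det_nonneg
  have hdet_re : RCLike.re N.det = RCLike.re a.det * RCLike.re M.det := by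
    simp [hdet, RCLike.mul_re, ha_im]
  rw [mul_assoc, ← Real.mul_rpow ha_re hM_re, ← hdet_re, ← htr]
  exact hN.card_mul_re_det_rpow_le_re_trace

end Matrix

theorem matrix_amgm_complex_general (d : ℕ)
    (a M : Matrix (Fin d) (Fin d) ℂ)
    (ha : a.PosSemidef) (hM : M.PosSemidef) :
    (a * M).trace.im = 0 ∧
    (a * M).trace.re ≥ d * a.det.re ^ ((1 : ℝ) / d) * M.det.re ^ ((1 : ℝ) / d) := by
  refine ⟨ha.im_trace_mul_eq_zero hM, ?_⟩
  simpa using ha.card_mul_re_det_rpow_mul_re_det_rpow_le_re_trace_mul hM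

/-- Complex matrix AM–GM: for Hermitian PSD complex matrices `a` and `M`,
`tr (a * M)` is real and `tr (a * M) ≥ d * (det a)^(1/d) * (det M)^(1/d)`. -/
theorem matrix_amgm_complex (d : ℕ) (hd : 1 ≤ d)
    (a M : Matrix (Fin d) (Fin d) ℂ)
    (ha : a.PosSemidef) (hM : M.PosSemidef) :
    (a * M).trace.im = 0 ∧
    (a * M).trace.re ≥ d * a.det.re ^ ((1 : ℝ) / d) * M.det.re ^ ((1 : ℝ) / d) :=
  matrix_amgm_complex_general d a M ha hM
end
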